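/- There exist probability measures μ₁ᴹ, μ₂ᴹ, μ₁ᶠ, μ₂ᶠ on ℝ, each with finite second moment and positive variance, such that: Var(μ₁ᴹ)/Var(μ₁ᶠ) > 1, Var(μ₂ᴹ)/Var(μ₂ᶠ) < 1, and yet Var((1/2)•μ₁ᴹ + (1/2)•μ₂ᴹ) / Var((1/2)•μ₁ᶠ + (1/2)•μ₂ᶠ) > 1. In other words, the overall (pooled) population can exhibit greater male variability (pooled variance ratio greater than 1) even though not every country individually has a variance ratio greater than 1. -/

import Mathlib

open MeasureTheory ProbabilityTheory
open scoped ENNReal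

/-! Mixing two populations in equal proportions averages their variances and adds the squared
half-distance between their means. In the example the two countries' female distributions have
the same mean, whereas the male means are far apart; this between-country term lifts the pooled
male variance above the pooled female one although men are less variable than women in one of
the countries. -/

section Mixture

variable {α : Type*} [MeasurableSpace α] {μ ν : Measure α}

lemma memLp_dirac [MeasurableSingletonClass α] {E : Type*} [NormedAddCommGroup E]
    (X : α → E) (p : ℝ≥0∞) (a : α) : MemLp X p (Measure.dirac a) :=
  (memLp_const (X a)).ae_eq (ae_eq_dirac X).symm

instance isProbabilityMeasure_half_smul_add_half_smul [IsProbabilityMeasure μ]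
    [IsProbabilityMeasure ν] : IsProbabilityMeasure ((1/2 : ℝ≥0∞) • μ + (1/2 : ℝ≥0∞) • ν) := by
  constructor
  simp [ENNReal.inv_two_add_inv_two]

lemma MeasureTheory.MemLp.half_smul_add_half_smul {X : α → ℝ} (hμ : MemLp X 2 μ)
    (hν : MemLp X 2 ν) :
    MemLp X 2 ((1/2 : ℝ≥0∞) • μ + (1/2 : ℝ≥0∞) • ν) := by
  rw [memLp_two_iff_integrable_sq ((hμ.1.smul_measure _).add_measure (hν.1.smul_measure _))]
  exact (((memLp_two_iff_integrable_sq hμ.1).1 hμ).smul_measure (by simp)).add_measure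
    (((memLp_two_iff_integrable_sq hν.1).1 hν).smul_measure (by simp))

lemma integral_half_smul_add_half_smul {X : α → ℝ} (hμ : Integrable X μ) (hν : Integrable X ν) :
    ∫ x, X x ∂((1/2 : ℝ≥0∞) • μ + (1/2 : ℝ≥0∞) • ν) = (μ[X] + ν[X]) / 2 := by
  rw [integral_add_measure (hμ.smul_measure (by simp)) (hν.smul_measure (by simp)),
    integral_smul_measure, integral_smul_measure]
  simp only [one_div, ENNReal.toReal_inv, ENNReal.toReal_ofNat, smul_eq_mul]
  ring

lemma variance_half_smul_add_half_smul [IsProbabilityMeasure μ] [IsProbabilityMeasure ν]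
    {X : α → ℝ} (hμ : MemLp X 2 μ) (hν : MemLp X 2 ν) :
    Var[X; (1/2 : ℝ≥0∞) • μ + (1/2 : ℝ≥0∞) • ν] =
      (Var[X; μ] + Var[X; ν]) / 2 + ((μ[X] - ν[X]) / 2) ^ 2 := by
  have hμ2 := (memLp_two_iff_integrable_sq hμ.1).1 hμ
  have hν2 := (memLp_two_iff_integrable_sq hν.1).1 hν
  rw [variance_eq_sub (hμ.half_smul_add_half_smul hν), variance_eq_sub hμ, variance_eq_sub hν,
    integral_half_smul_add_half_smul (X := X ^ 2) hμ2 hν2,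
    integral_half_smul_add_half_smul (hμ.integrable one_le_two) (hν.integrable one_le_two)]
  ring

end Mixture

noncomputable def twoPoint (a b : ℝ) : Measure ℝ :=
  (1/2 : ℝ≥0∞) • Measure.dirac a + (1/2 : ℝ≥0∞) • Measure.dirac b

instance isProbabilityMeasure_twoPoint (a b : ℝ) : IsProbabilityMeasure (twoPoint a b) :=
  isProbabilityMeasure_half_smul_add_half_smul

lemma memLp_id_twoPoint (a b : ℝ) : MemLp id 2 (twoPoint a b) :=
  (memLp_dirac id 2 a).half_smul_add_half_smul (memLp_dirac id 2 b)

lemma integral_id_twoPoint (a b : ℝ) : ∫ x, id x ∂(twoPoint a b) = (a + b) / 2 := by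
  rw [twoPoint, integral_half_smul_add_half_smul ((memLp_dirac id 1 a).integrable le_rfl)
    ((memLp_dirac id 1 b).integrable le_rfl), integral_dirac, integral_dirac]
  rfl

lemma variance_id_twoPoint (a b : ℝ) : Var[id; twoPoint a b] = ((a - b) / 2) ^ 2 := by
  rw [twoPoint, variance_half_smul_add_half_smul (memLp_dirac id 2 a) (memLp_dirac id 2 b),
    variance_dirac, variance_dirac, integral_dirac, integral_dirac]
  simp

/-- Example 1 of the paper: there exist probability measures on `ℝ` (male and female score
distributions in two countries), each with finite second moment and positive variance, such
that country 1 has variance ratio `> 1`, country 2 has variance ratio `< 1`, yet the pooled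
(equal-weight mixture) population has variance ratio `> 1`. This refutes the premise (P). -/
theorem exists_pooled_GMV_without_countrywise_GMV :
    ∃ (μ₁M μ₂M μ₁F μ₂F : Measure ℝ),
      IsProbabilityMeasure μ₁M ∧ IsProbabilityMeasure μ₂M ∧
      IsProbabilityMeasure μ₁F ∧ IsProbabilityMeasure μ₂F ∧
      MemLp id 2 μ₁M ∧ MemLp id 2 μ₂M ∧ MemLp id 2 μ₁F ∧ MemLp id 2 μ₂F ∧
      0 < variance id μ₁M ∧ 0 < variance id μ₂M ∧
      0 < variance id μ₁F ∧ 0 < variance id μ₂F ∧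
      variance id μ₁M / variance id μ₁F > 1 ∧
      variance id μ₂M / variance id μ₂F < 1 ∧
      variance id ((1/2 : ℝ≥0∞) • μ₁M + (1/2 : ℝ≥0∞) • μ₂M) /
          variance id ((1/2 : ℝ≥0∞) • μ₁F + (1/2 : ℝ≥0∞) • μ₂F) > 1 := by
  have pooled_male :
      Var[id; (1/2 : ℝ≥0∞) • twoPoint (-4) 0 + (1/2 : ℝ≥0∞) • twoPoint (3/2) (5/2)] = 49 / 8 := by
    rw [variance_half_smul_add_half_smul (memLp_id_twoPoint _ _) (memLp_id_twoPoint _ _),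
      variance_id_twoPoint, variance_id_twoPoint, integral_id_twoPoint, integral_id_twoPoint]
    norm_num
  have pooled_female :
      Var[id; (1/2 : ℝ≥0∞) • twoPoint 0 2 + (1/2 : ℝ≥0∞) • twoPoint 0 2] = 1 := by
    rw [variance_half_smul_add_half_smul (memLp_id_twoPoint _ _) (memLp_id_twoPoint _ _),
      variance_id_twoPoint]
    norm_num
  refine ⟨twoPoint (-4) 0, twoPoint (3/2) (5/2), twoPoint 0 2, twoPoint 0 2,
    inferInstance, inferInstance, inferInstance, inferInstance,
    memLp_id_twoPoint _ _, memLp_id_twoPoint _ _, memLp_id_twoPoint _ _, memLp_id_twoPoint _ _,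
    ?_⟩
  simp only [variance_id_twoPoint, pooled_male, pooled_female]
  norm_num
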